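/- For every timestep t ≥ 1, the stored mass satisfies the single-step conservation law m_c(t) = m_c(t−1) + x(t) − m_h(t). -/

import Mathlib

/-!
Column sums of `R t` equal one, so redistribution preserves the total mass, and the input gate
sums to one, so the total of `m_tot(t)` is `m_c(t-1) + x(t)`. The output gate then splits each
entry of `m_tot(t)` into its stored part and its efflux.
-/

open Finset Matrix

section

variable {ι R : Type*} [Fintype ι]

theorem Matrix.sum_mulVec_of_sum_col_eq_one [CommSemiring R] {A : Matrix ι ι R}
    (hA : ∀ j, ∑ i, A i j = 1) (v : ι → R) : ∑ i, (A *ᵥ v) i = ∑ j, v j := by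
  simp only [mulVec, dotProduct]
  rw [sum_comm]
  simp only [← sum_mul, hA, one_mul]

theorem sum_one_sub_mul_add_sum_mul [CommRing R] (o m : ι → R) :
    ∑ k, (1 - o k) * m k + ∑ k, o k * m k = ∑ k, m k := by
  rw [← sum_add_distrib]
  exact sum_congr rfl fun k _ => by ring

end

theorem mclstm_step_conservation_general
    (K : ℕ)
    (x : ℕ → ℝ)
    (i : ℕ → Fin K → ℝ)
    (hi_sum : ∀ t, 1 ≤ t → ∑ k, i t k = 1)
    (o : ℕ → Fin K → ℝ)
    (R : ℕ → Matrix (Fin K) (Fin K) ℝ)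
    (hR_col : ∀ t j, 1 ≤ t → ∑ k, R t k j = 1)
    (c mtot h : ℕ → Fin K → ℝ)
    (hmtot : ∀ t, 1 ≤ t → mtot t = (R t).mulVec (c (t - 1)) + x t • i t)
    (hc : ∀ t, 1 ≤ t → c t = fun k => (1 - o t k) * mtot t k)
    (hh : ∀ t, 1 ≤ t → h t = fun k => o t k * mtot t k)
    (t : ℕ) (ht : 1 ≤ t) :
    ∑ k, c t k = ∑ k, c (t - 1) k + x t - ∑ k, h t k := by
  have hinflux : ∑ k, mtot t k = ∑ k, c (t - 1) k + x t := by
    simp only [hmtot t ht, Pi.add_apply, Pi.smul_apply, smul_eq_mul, sum_add_distrib, ← mul_sum,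
      hi_sum t ht, mul_one, sum_mulVec_of_sum_col_eq_one (hR_col t · ht)]
  have hsplit := sum_one_sub_mul_add_sum_mul (o t) (mtot t)
  rw [hc t ht, hh t ht]
  linarith

/-- **MC-LSTM single-step conservation:** for every t ≥ 1,
m_c(t) = m_c(t−1) + x(t) − m_h(t). -/
theorem mclstm_step_conservation
    (K : ℕ)
    (x : ℕ → ℝ) (hx : ∀ t, 1 ≤ t → 0 ≤ x t)
    (i : ℕ → Fin K → ℝ)
    (hi_nonneg : ∀ t k, 1 ≤ t → 0 ≤ i t k)
    (hi_sum : ∀ t, 1 ≤ t → ∑ k, i t k = 1)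
    (o : ℕ → Fin K → ℝ)
    (ho : ∀ t k, 1 ≤ t → o t k ∈ Set.Icc (0 : ℝ) 1)
    (R : ℕ → Matrix (Fin K) (Fin K) ℝ)
    (hR_nonneg : ∀ t k j, 1 ≤ t → 0 ≤ R t k j)
    (hR_col : ∀ t j, 1 ≤ t → ∑ k, R t k j = 1)
    (c mtot h : ℕ → Fin K → ℝ)
    (hc0 : ∀ k, 0 ≤ c 0 k)
    (hmtot : ∀ t, 1 ≤ t → mtot t = (R t).mulVec (c (t - 1)) + x t • i t)
    (hc : ∀ t, 1 ≤ t → c t = fun k => (1 - o t k) * mtot t k)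
    (hh : ∀ t, 1 ≤ t → h t = fun k => o t k * mtot t k)
    (t : ℕ) (ht : 1 ≤ t) :
    ∑ k, c t k = ∑ k, c (t - 1) k + x t - ∑ k, h t k :=
  mclstm_step_conservation_general K x i hi_sum o R hR_col c mtot h hmtot hc hh t ht
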